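/- Let C : finCard → Ab be an (augmented) symmetric cosimplicial abelian group, write C_n = C(n), δ^n_i = C(δ^n_i), σ^n_i = C(σ^n_i), and define the differential ∂_n : C_n → C_{n+1} by ∂_n(c) = Σ_{i=1}^{n+1} (−1)^{i−1} δ^n_i(c). If c ∈ C_n is alternating, i.e. σ^n_i(c) = −c for all 1 ≤ i ≤ n−1, then ∂_n(c) is alternating, i.e. σ^{n+1}_i(∂_n(c)) = −∂_n(c) for all 1 ≤ i ≤ n. Hence the alternating elements form a subcomplex of the cochain complex associated to C. -/

import Mathlib

open CategoryTheory

/-- The category of finite cardinals: objects are natural numbers, and morphisms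
`n ⟶ m` are all functions `Fin n → Fin m` (composition is diagrammatic). -/
structure FinCard : Type where
  len : ℕ

instance : Category FinCard where
  Hom n m := Fin n.len → Fin m.len
  id _ := _root_.id
  comp f g := g ∘ f
  id_comp _ := rfl
  comp_id _ := rfl
  assoc _ _ _ := rfl

/-- The object of `FinCard` corresponding to `n : ℕ`. -/
def FinCard.of (n : ℕ) : FinCard := ⟨n⟩

/-- The coface `δ^n_i : [n] → [n+1]` (1-based: `x ↦ x` if `x < i`, `x ↦ x+1` if `x ≥ i`),
as a morphism of `FinCard`. -/
def deltaHom (n i : ℕ) : FinCard.of n ⟶ FinCard.of (n + 1) :=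
  show Fin n → Fin (n + 1) from fun x =>
  if x.val + 1 < i then ⟨x.val, by have := x.isLt; omega⟩
  else ⟨x.val + 1, by have := x.isLt; omega⟩

/-- The symmetry `σ^n_i : [n] → [n]` (the transposition exchanging `i` and `i+1`, 1-based;
i.e. the transposition of `i−1` and `i` in 0-based terms), as a morphism of `FinCard`.
Requires `1 ≤ i ≤ n−1`. -/
def sigmaHom (n i : ℕ) (h1 : 1 ≤ i) (h2 : i + 1 ≤ n) : FinCard.of n ⟶ FinCard.of n :=
  show Fin n → Fin n from ⇑(Equiv.swap (⟨i - 1, by omega⟩ : Fin n) ⟨i, by omega⟩)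

/-- An element `c` of the `n`-th term of an (augmented) symmetric cosimplicial abelian group
is alternating if all the symmetries `σ^n_i` act on it by `-1`. -/
def IsAlternating (C : FinCard ⥤ AddCommGrpCat) (n : ℕ) (c : C.obj (FinCard.of n)) : Prop :=
  ∀ (i : ℕ) (h1 : 1 ≤ i) (h2 : i + 1 ≤ n), (C.map (sigmaHom n i h1 h2)) c = -c

/-- The differential `∂_n (c) = Σ_{i=1}^{n+1} (−1)^{i−1} δ^n_i (c)` of the cochain complex
associated to an (augmented) symmetric cosimplicial abelian group. -/
def differential (C : FinCard ⥤ AddCommGrpCat) (n : ℕ) (c : C.obj (FinCard.of n)) :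
    C.obj (FinCard.of (n + 1)) :=
  ∑ i ∈ Finset.Icc 1 (n + 1), ((-1 : ℤ) ^ (i - 1)) • (C.map (deltaHom n i)) c

/-!
The cosymmetric identities `δ_i ≫ σ_i = δ_{i+1}`, `δ_{i+1} ≫ σ_i = δ_i`, and, for `j ∉ {i, i+1}`,
`δ_j ≫ σ_i = σ' ≫ δ_j` with `σ'` a transposition of `[n]`, show that `σ_i` exchanges the
`i`-th and `(i+1)`-st terms of `∂c`, which carry opposite signs, and negates every other term
because `c` is alternating. Reindexing the sum by the transposition `i ↔ (i+1)` gives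
`σ_i (∂c) = -∂c`.
-/

open Finset

namespace FinCard

lemma comp_apply {n m k : ℕ} (f : of n ⟶ of m) (g : of m ⟶ of k) (x : Fin (of n).len) :
    (f ≫ g) x = g (f x) :=
  rfl

lemma hom_ext_val {n m : ℕ} {f g : FinCard.of n ⟶ FinCard.of m}
    (h : ∀ x : Fin (of n).len, (f x : ℕ) = g x) : f = g :=
  funext fun x => Fin.ext (h x)

end FinCard

section Identities

variable {n : ℕ}

@[simp]
lemma sigmaHom_val (i : ℕ) (h1 : 1 ≤ i) (h2 : i + 1 ≤ n) (x : Fin (FinCard.of n).len) :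
    (sigmaHom n i h1 h2 x : ℕ) =
      if (x : ℕ) = i - 1 then i else if (x : ℕ) = i then i - 1 else x := by
  obtain ⟨a, ha⟩ := x
  change ((Equiv.swap (⟨i - 1, by omega⟩ : Fin n) ⟨i, by omega⟩ ⟨a, ha⟩ : Fin n) : ℕ) = _
  rw [Equiv.swap_apply_def]
  simp only [Fin.ext_iff]
  split_ifs <;> rfl

@[simp]
lemma deltaHom_val (j : ℕ) (x : Fin (FinCard.of n).len) :
    (deltaHom n j x : ℕ) = if (x : ℕ) + 1 < j then (x : ℕ) else (x : ℕ) + 1 := by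
  unfold deltaHom
  split_ifs <;> rfl

lemma deltaHom_comp_sigmaHom_self (i : ℕ) (h1 : 1 ≤ i) (h2 : i + 1 ≤ n + 1) :
    deltaHom n i ≫ sigmaHom (n + 1) i h1 h2 = deltaHom n (i + 1) :=
  FinCard.hom_ext_val fun x => by
    have : (x : ℕ) < n := x.isLt
    simp only [FinCard.comp_apply, sigmaHom_val, deltaHom_val]
    split_ifs <;> omega

lemma deltaHom_succ_comp_sigmaHom (i : ℕ) (h1 : 1 ≤ i) (h2 : i + 1 ≤ n + 1) :
    deltaHom n (i + 1) ≫ sigmaHom (n + 1) i h1 h2 = deltaHom n i :=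
  FinCard.hom_ext_val fun x => by
    have : (x : ℕ) < n := x.isLt
    simp only [FinCard.comp_apply, sigmaHom_val, deltaHom_val]
    split_ifs <;> omega

lemma sigmaHom_pred_comp_deltaHom_of_lt {i j : ℕ} (hj : 1 ≤ j) (hji : j < i)
    (h2 : i + 1 ≤ n + 1) :
    sigmaHom n (i - 1) (by omega) (by omega) ≫ deltaHom n j =
      deltaHom n j ≫ sigmaHom (n + 1) i (by omega) h2 :=
  FinCard.hom_ext_val fun x => by
    have : (x : ℕ) < n := x.isLt
    simp only [FinCard.comp_apply, sigmaHom_val, deltaHom_val]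
    split_ifs <;> omega

lemma sigmaHom_comp_deltaHom_of_gt {i j : ℕ} (h1 : 1 ≤ i) (hij : i + 1 < j) (hj : j ≤ n + 1) :
    sigmaHom n i h1 (by omega) ≫ deltaHom n j =
      deltaHom n j ≫ sigmaHom (n + 1) i h1 (by omega) :=
  FinCard.hom_ext_val fun x => by
    have : (x : ℕ) < n := x.isLt
    simp only [FinCard.comp_apply, sigmaHom_val, deltaHom_val]
    split_ifs <;> omega

end Identities

section Alternating

variable (C : FinCard ⥤ AddCommGrpCat) {n : ℕ} {c : C.obj (FinCard.of n)}

lemma map_sigmaHom_map_deltaHom_of_ne (hc : IsAlternating C n c) {i j : ℕ} (h1 : 1 ≤ i)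
    (h2 : i + 1 ≤ n + 1) (hj : j ∈ Icc 1 (n + 1)) (hji : j ≠ i) (hji' : j ≠ i + 1) :
    C.map (sigmaHom (n + 1) i h1 h2) (C.map (deltaHom n j) c) = -C.map (deltaHom n j) c := by
  rw [mem_Icc] at hj
  rw [← ConcreteCategory.comp_apply, ← C.map_comp]
  rcases hji.lt_or_gt with hlt | hgt
  · rw [← sigmaHom_pred_comp_deltaHom_of_lt hj.1 hlt h2, C.map_comp,
      ConcreteCategory.comp_apply, hc, map_neg]
  · rw [← sigmaHom_comp_deltaHom_of_gt h1 (by omega) hj.2, C.map_comp,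
      ConcreteCategory.comp_apply, hc, map_neg]

lemma map_sigmaHom_signed_map_deltaHom (hc : IsAlternating C n c) {i j : ℕ} (h1 : 1 ≤ i)
    (h2 : i + 1 ≤ n + 1) (hj : j ∈ Icc 1 (n + 1)) :
    C.map (sigmaHom (n + 1) i h1 h2) ((-1 : ℤ) ^ (j - 1) • C.map (deltaHom n j) c) =
      -((-1 : ℤ) ^ (Equiv.swap i (i + 1) j - 1) •
        C.map (deltaHom n (Equiv.swap i (i + 1) j)) c) := by
  have hsign : (-1 : ℤ) ^ i = -(-1) ^ (i - 1) := by
    rw [← Nat.sub_add_cancel h1, pow_succ, mul_neg_one, Nat.add_sub_cancel]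
  rw [map_zsmul, ← ConcreteCategory.comp_apply, ← C.map_comp]
  rcases eq_or_ne j i with rfl | hji
  · rw [Equiv.swap_apply_left, deltaHom_comp_sigmaHom_self, Nat.add_sub_cancel, hsign,
      neg_smul, neg_neg]
  rcases eq_or_ne j (i + 1) with rfl | hji'
  · rw [Equiv.swap_apply_right, deltaHom_succ_comp_sigmaHom, Nat.add_sub_cancel, hsign,
      neg_smul]
  rw [Equiv.swap_apply_of_ne_of_ne hji hji', C.map_comp, ConcreteCategory.comp_apply,
    map_sigmaHom_map_deltaHom_of_ne C hc h1 h2 hj hji hji', smul_neg]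

end Alternating

/-- STATEMENT 9: in an (augmented) symmetric cosimplicial abelian group
`C : finCard ⥤ Ab`, the differential of an alternating element is alternating; hence the
alternating elements form a subcomplex of the associated cochain complex. -/
theorem differential_of_alternating_is_alternating
    (C : FinCard ⥤ AddCommGrpCat) (n : ℕ) (c : C.obj (FinCard.of n))
    (hc : IsAlternating C n c) :
    IsAlternating C (n + 1) (differential C n c) := by
  intro i h1 h2
  have hsupp : {j | Equiv.swap i (i + 1) j ≠ j} ⊆ Icc 1 (n + 1) := by
    intro j hj
    obtain ⟨-, rfl | rfl⟩ := Equiv.swap_apply_ne_self_iff.1 hj <;>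
      simp only [coe_Icc, Set.mem_Icc] <;> omega
  calc C.map (sigmaHom (n + 1) i h1 h2) (differential C n c)
      = ∑ j ∈ Icc 1 (n + 1), -((-1 : ℤ) ^ (Equiv.swap i (i + 1) j - 1) •
          C.map (deltaHom n (Equiv.swap i (i + 1) j)) c) := by
        rw [differential, map_sum]
        exact sum_congr rfl fun j hj => map_sigmaHom_signed_map_deltaHom C hc h1 h2 hj
    _ = -differential C n c := by
        rw [sum_neg_distrib, Equiv.Perm.sum_comp _ _
          (fun j => (-1 : ℤ) ^ (j - 1) • C.map (deltaHom n j) c) hsupp, differential]
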